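/- arXiv:1609.05302 — 4 statements merged into one kernel-verified Lean document; each statement's English description precedes it below -/
import Mathlib

section
/- Let R be a discrete valuation domain with prime element p, and let M be a left R-module. If pM is a direct sum of cyclic modules, then M is a direct sum of cyclic modules. -/
/-- `M` is (an internal) direct sum of cyclic modules. -/
def IsDirectSumOfCyclics (R : Type) [Ring R] (M : Type u) [AddCommGroup M]
    [Module R M] : Prop :=
  ∃ (ι : Type u) (N : ι → Submodule R M),
    (letI : DecidableEq ι := Classical.decEq ι; DirectSum.IsInternal N) ∧ ∀ i : ι, ∃ m : M, N i = Submodule.span R {m}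

/-!
Write `pM = ⨁ R cᵢ` and lift each generator to some `aᵢ` with `p aᵢ = cᵢ`, taking `aᵢ = 0` when
`cᵢ = 0`. Since every non-unit of `R` is a multiple of `p`, the cyclic submodules `R aᵢ` are
independent, and their sum `A` satisfies `pA = pM`, so `M = A + M[p]`. The `p`-torsion `M[p]` is a
vector space over `R/p`, so a complement of `A ⊓ M[p]` inside it is a complement `S` of `A` in `M`
and is a direct sum of simple, hence cyclic, modules. Thus `M = (⨁ R aᵢ) ⊕ S`.
-/

open Submodule IsLocalRing
open scoped Pointwise

theorem iSupIndep_sumElim {α ι κ : Type*} [CompleteLattice α] [IsModularLattice α]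
    {f : ι → α} {g : κ → α} (hf : iSupIndep f) (hg : iSupIndep g)
    (hfg : Disjoint (⨆ i, f i) (⨆ j, g j)) : iSupIndep (Sum.elim f g) := by
  rintro (i | j)
  · refine (Disjoint.disjoint_sup_right_of_disjoint_sup_left (hf i)
      (hfg.mono_left (sup_le (le_iSup f i) (iSup₂_le fun i' _ => le_iSup f i')))).mono_right ?_
    refine iSup₂_le ?_
    rintro (i' | j) hne
    · exact le_sup_of_le_left (le_iSup₂_of_le i' (fun h => hne (congrArg Sum.inl h)) le_rfl)
    · exact le_sup_of_le_right (le_iSup g j)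
  · refine (Disjoint.disjoint_sup_right_of_disjoint_sup_left (hg j)
      (hfg.symm.mono_left (sup_le (le_iSup g j) (iSup₂_le fun j' _ => le_iSup g j')))).mono_right ?_
    refine iSup₂_le ?_
    rintro (i | j') hne
    · exact le_sup_of_le_right (le_iSup f i)
    · exact le_sup_of_le_left (le_iSup₂_of_le j' (fun h => hne (congrArg Sum.inr h)) le_rfl)

theorem exists_le_isCompl_of_sup_eq_top {α : Type*} [Lattice α] [BoundedOrder α] {a t : α}
    [ComplementedLattice (Set.Iic t)] (h : a ⊔ t = ⊤) : ∃ s ≤ t, IsCompl a s := by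
  obtain ⟨s, hst, hinf, hsup⟩ := Set.Iic.complementedLattice_iff.mp ‹_› (a ⊓ t) inf_le_right
  refine ⟨s, hst, disjoint_iff.mpr ?_, codisjoint_iff.mpr ?_⟩
  · rwa [← inf_eq_right.mpr hst, ← inf_assoc]
  · rw [← h, ← hsup, ← sup_assoc, sup_inf_self]

section DirectSumOfCyclics

variable {R : Type} [Ring R] {M : Type u} [AddCommGroup M] [Module R M]

theorem isDirectSumOfCyclics_iff :
    IsDirectSumOfCyclics R M ↔
      ∃ (ι : Type u) (v : ι → M), iSupIndep (fun i => R ∙ v i) ∧ ⨆ i, R ∙ v i = ⊤ := by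
  constructor
  · rintro ⟨ι, N, hN, hcyc⟩
    let := Classical.decEq ι
    choose v hv using hcyc
    obtain rfl : N = fun i => R ∙ v i := funext hv
    exact ⟨ι, v, hN.submodule_iSupIndep, hN.submodule_iSup_eq_top⟩
  · rintro ⟨ι, v, hind, hsup⟩
    let := Classical.decEq ι
    exact ⟨ι, fun i => R ∙ v i,
      DirectSum.isInternal_submodule_of_iSupIndep_of_iSup_eq_top hind hsup, fun i => ⟨v i, rfl⟩⟩

theorem IsDirectSumOfCyclics.exists_iSupIndep_iSup_span_singleton_eq {N : Submodule R M}
    (h : IsDirectSumOfCyclics R N) :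
    ∃ (ι : Type u) (v : ι → M), iSupIndep (fun i => R ∙ v i) ∧ ⨆ i, R ∙ v i = N := by
  obtain ⟨ι, v, hind, hsup⟩ := isDirectSumOfCyclics_iff.mp h
  have hmap : ∀ i, (R ∙ v i).map N.subtype = R ∙ (v i : M) := fun i => by
    simp [map_span]
  refine ⟨ι, fun i => v i, ?_, ?_⟩
  · simpa only [hmap] using N.subtype.iSupIndep_map N.injective_subtype hind
  · simp only [← hmap, ← Submodule.map_iSup, hsup, map_subtype_top]

theorem isDirectSumOfCyclics_of_isCompl {ι κ : Type u} {a : ι → M} {b : κ → M}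
    (ha : iSupIndep fun i => R ∙ a i) (hb : iSupIndep fun j => R ∙ b j)
    (hab : IsCompl (⨆ i, R ∙ a i) (⨆ j, R ∙ b j)) : IsDirectSumOfCyclics R M := by
  refine isDirectSumOfCyclics_iff.mpr ⟨ι ⊕ κ, Sum.elim a b, ?_, ?_⟩
  · have : (fun k => R ∙ Sum.elim a b k) = Sum.elim (fun i => R ∙ a i) (fun j => R ∙ b j) := by
      ext (i | j) <;> rfl
    rw [this]
    exact iSupIndep_sumElim ha hb hab.disjoint
  · rw [iSup_sum]
    exact codisjoint_iff.mp hab.codisjoint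

variable (R M) in
theorem IsSemisimpleModule.isDirectSumOfCyclics [IsSemisimpleModule R M] :
    IsDirectSumOfCyclics R M := by
  obtain ⟨s, hind, hsup, hsimple⟩ := IsSemisimpleModule.exists_sSupIndep_sSup_simples_eq_top R M
  have hcyc : ∀ W : s, ∃ x : M, (W : Submodule R M) = R ∙ x := fun W => by
    have hatom := isSimpleModule_iff_isAtom.mp (hsimple W W.2)
    obtain ⟨x, hxW, hx0⟩ := (Submodule.ne_bot_iff _).mp hatom.1
    refine ⟨x, ((hatom.le_iff.mp ((span_singleton_le_iff_mem x _).mpr hxW)).resolve_left ?_).symm⟩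
    simpa [span_singleton_eq_bot] using hx0
  choose v hv using hcyc
  refine isDirectSumOfCyclics_iff.mpr ⟨s, v, ?_, ?_⟩
  · simpa only [← hv] using (sSupIndep_iff s).mp hind
  · simpa only [← hv, ← sSup_eq_iSup'] using hsup

end DirectSumOfCyclics

section CommRing

variable {R : Type*} [CommRing R] {M : Type*} [AddCommGroup M] [Module R M]

theorem smul_iSup_span_singleton {ι : Type*} (p : R) (a : ι → M) :
    p • ⨆ i, R ∙ a i = ⨆ i, R ∙ (p • a i) := by
  simp only [smul_iSup', smul_span, Set.smul_set_singleton]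

theorem exists_smul_eq_of_mem_smul_top {p : R} {x : M} (hx : x ∈ p • (⊤ : Submodule R M)) :
    ∃ y, p • y = x ∧ (p • y = 0 → y = 0) := by
  by_cases hx0 : x = 0
  · exact ⟨0, by rw [smul_zero, hx0], fun _ => rfl⟩
  · obtain ⟨y, -, hy⟩ := (mem_smul_pointwise_iff_exists _ _ _).mp hx
    exact ⟨y, hy, fun h => absurd (hy ▸ h) hx0⟩

theorem sup_torsionBy_eq_top_of_smul_top_le {p : R} {A : Submodule R M}
    (h : p • (⊤ : Submodule R M) ≤ p • A) : A ⊔ torsionBy R M p = ⊤ := by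
  refine eq_top_iff.mpr fun x _ => ?_
  obtain ⟨w, hw, hpw⟩ := (mem_smul_pointwise_iff_exists _ _ _).mp
    (h (smul_mem_pointwise_smul x p ⊤ trivial))
  refine mem_sup.mpr ⟨w, hw, x - w, ?_, add_sub_cancel w x⟩
  rw [mem_torsionBy_iff, smul_sub, hpw, sub_self]

variable [IsLocalRing R] {p : R}

theorem mem_span_singleton_smul_of_smul_eq_zero (hp : maximalIdeal R = Ideal.span {p})
    {a v : M} (ha : p • a = 0 → a = 0) (hv : v ∈ R ∙ a) (hpv : p • v = 0) :
    v ∈ R ∙ (p • a) := by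
  obtain ⟨r, rfl⟩ := mem_span_singleton.mp hv
  by_cases hr : IsUnit r
  · rw [smul_comm, hr.smul_eq_zero] at hpv
    simp [ha hpv]
  · obtain ⟨q, rfl⟩ := Ideal.mem_span_singleton'.mp (hp ▸ (mem_maximalIdeal r).mpr hr)
    rw [mul_smul]
    exact smul_mem _ _ (mem_span_singleton_self _)

theorem iSupIndep_span_singleton_of_iSupIndep_span_singleton_smul
    (hp : maximalIdeal R = Ideal.span {p}) {ι : Type*} {a : ι → M}
    (hind : iSupIndep fun i => R ∙ (p • a i)) (ha : ∀ i, p • a i = 0 → a i = 0) :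
    iSupIndep fun i => R ∙ a i := by
  rw [iSupIndep_iff_finsetSum_eq_zero_imp_eq_zero] at hind ⊢
  intro s v hv hsum
  have hpv : ∀ i ∈ s, p • v i = 0 := by
    refine hind s (fun i => p • v i) (fun i hi => ?_) (by rw [← Finset.smul_sum, hsum, smul_zero])
    obtain ⟨r, hr⟩ := mem_span_singleton.mp (hv i hi)
    exact mem_span_singleton.mpr ⟨r, by rw [← hr, smul_comm]⟩
  exact hind s v (fun i hi => mem_span_singleton_smul_of_smul_eq_zero hp (ha i) (hv i hi)
    (hpv i hi)) hsum

end CommRing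

/-- Over a discrete valuation domain with prime element `p`: if `pM` is a direct sum of
cyclic modules, then so is `M`. -/
theorem isDirectSumOfCyclics_of_smul_top
    (R : Type) [CommRing R] [IsDomain R] [IsDiscreteValuationRing R]
    (p : R) (hp : Irreducible p)
    (M : Type) [AddCommGroup M] [Module R M]
    (h : IsDirectSumOfCyclics R (↥(Ideal.span {p} • (⊤ : Submodule R M)))) :
    IsDirectSumOfCyclics R M := by
  obtain ⟨ι, c, hc_ind, hc_sup⟩ := h.exists_iSupIndep_iSup_span_singleton_eq
  rw [ideal_span_singleton_smul] at hc_sup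
  choose a hac ha using fun i => exists_smul_eq_of_mem_smul_top
    (hc_sup ▸ mem_iSup_of_mem i (mem_span_singleton_self (c i)))
  obtain rfl : c = fun i => p • a i := funext fun i => (hac i).symm
  have hA_ind := iSupIndep_span_singleton_of_iSupIndep_span_singleton_smul hp.maximalIdeal_eq
    hc_ind ha
  have hA_sup : (⨆ i, R ∙ a i) ⊔ torsionBy R M p = ⊤ :=
    sup_torsionBy_eq_top_of_smul_top_le (by rw [smul_iSup_span_singleton, hc_sup])
  have := Submodule.isSemisimple_torsionBy_of_irreducible (M := M) hp
  have := (torsionBy R M p).mapIic.complementedLattice_iff.mp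
    ((isSemisimpleModule_iff R _).mp this)
  obtain ⟨S, hST, hAS⟩ := exists_le_isCompl_of_sup_eq_top hA_sup
  have : IsSemisimpleModule R S := .of_injective (inclusion hST) (inclusion_injective hST)
  obtain ⟨κ, b, hb_ind, hb_sup⟩ :=
    (IsSemisimpleModule.isDirectSumOfCyclics R S).exists_iSupIndep_iSup_span_singleton_eq
  exact isDirectSumOfCyclics_of_isCompl hA_ind hb_ind (hb_sup ▸ hAS)
end

section
/- Let R be a ring. If a flat left R-module M is the direct limit of a countable (ω-indexed) direct system of projective modules, then M has projective dimension at most 1. -/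
/-!
Index the system by `ℕ` and let `shift` send `x ∈ G n` to `f x ∈ G (n + 1)` inside `⨁ G n`.
Then `0 → ⨁ G n → ⨁ G n → lim G → 0`, with first map `1 - shift`, is exact: `1 - shift` is
injective because `shift` strictly raises the lowest nonzero degree, and its image contains every
relation `x - f_{ij} x` of the direct limit by telescoping. So `M` has a projective resolution of
length one, and by Schanuel's lemma the kernel of any surjection from a projective module onto
`M`, in particular of the canonical free cover, is projective.
-/

/-- `pdLE R n M` : `M` has projective dimension at most `n` (via iterated syzygies of the
canonical free cover). -/
def pdLE (R : Type) [Ring R] : (n : ℕ) → (M : Type u) → [AddCommGroup M] → [Module R M] → Prop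
  | 0, M, _, _ => Module.Projective R M
  | n+1, M, _, _ =>
      pdLE R n (LinearMap.ker (Finsupp.linearCombination R (_root_.id : M → M)))

section Schanuel

open LinearMap Module

variable {R : Type*} [Ring R] {N F Q : Type*} [AddCommGroup N] [Module R N]
  [AddCommGroup F] [Module R F] [AddCommGroup Q] [Module R Q]

theorem exact_restrict_inr_fst_subtype_ker_coprod (p : F →ₗ[R] N) (q : Q →ₗ[R] N) :
    Function.Exact
      ((inr R F Q).restrict fun y (hy : y ∈ ker q) => by simpa using hy :
        ker q →ₗ[R] ker (p.coprod q))
      (fst R F Q ∘ₗ (ker (p.coprod q)).subtype) := by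
  rintro ⟨⟨x, y⟩, hxy⟩
  constructor
  · rintro (rfl : x = 0)
    exact ⟨⟨y, by simpa using hxy⟩, rfl⟩
  · rintro ⟨y, hy⟩
    rw [← hy]
    rfl

theorem fst_comp_subtype_ker_coprod_surjective (p : F →ₗ[R] N) {q : Q →ₗ[R] N}
    (hq : Function.Surjective q) :
    Function.Surjective (fst R F Q ∘ₗ (ker (p.coprod q)).subtype) := fun x => by
  obtain ⟨y, hy⟩ := hq (-p x)
  exact ⟨⟨(x, y), by simp [hy]⟩, rfl⟩

noncomputable def kerCoprodEquiv [Projective R F] (p : F →ₗ[R] N) {q : Q →ₗ[R] N}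
    (hq : Function.Surjective q) : ker (p.coprod q) ≃ₗ[R] ker q × F :=
  have hsplit := (fst R F Q ∘ₗ (ker (p.coprod q)).subtype).exists_rightInverse_of_surjective
    (range_eq_top.2 (fst_comp_subtype_ker_coprod_surjective p hq))
  ((exact_restrict_inr_fst_subtype_ker_coprod p q).splitSurjectiveEquiv
    (fun _ _ h => Subtype.ext (congrArg (fun v : ker (p.coprod q) => (v : F × Q).2) h))
    ⟨hsplit.choose, hsplit.choose_spec⟩).1

noncomputable def kerCoprodCommEquiv (p : F →ₗ[R] N) (q : Q →ₗ[R] N) :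
    ker (p.coprod q) ≃ₗ[R] ker (q.coprod p) :=
  (LinearEquiv.prodComm R F Q).ofSubmodules _ _ <| by
    ext ⟨y, x⟩
    simp [Submodule.mem_map_equiv, add_comm]

noncomputable def schanuelEquiv [Projective R F] [Projective R Q] {p : F →ₗ[R] N}
    {q : Q →ₗ[R] N} (hp : Function.Surjective p) (hq : Function.Surjective q) :
    (ker p × Q) ≃ₗ[R] (ker q × F) :=
  (kerCoprodEquiv q hp).symm ≪≫ₗ kerCoprodCommEquiv q p ≪≫ₗ kerCoprodEquiv p hq

theorem Module.Projective.ker_of_surjective_of_ker [Projective R F] [Projective R Q]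
    {p : F →ₗ[R] N} {q : Q →ₗ[R] N} (hp : Function.Surjective p) (hq : Function.Surjective q)
    [Projective R (ker q)] : Projective R (ker p) :=
  have := Projective.of_equiv (schanuelEquiv hp hq).symm
  .of_split (inl R _ Q) (fst R _ Q) (fst_comp_inl R _ Q)

end Schanuel

open DirectSum

namespace Module.DirectLimit

section

variable {R ι : Type*} [Semiring R] [Preorder ι] [DecidableEq ι] {G : ι → Type*}
  [∀ i, AddCommMonoid (G i)] [∀ i, Module R (G i)] (f : ∀ i j, i ≤ j → G i →ₗ[R] G j)

noncomputable def ofDirectSum : (⨁ i, G i) →ₗ[R] DirectLimit G f :=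
  toModule R ι _ (of R ι G f)

theorem ofDirectSum_surjective [Nonempty ι] [IsDirectedOrder ι] :
    Function.Surjective (ofDirectSum f) := fun z => by
  obtain ⟨i, x, rfl⟩ := exists_of z
  exact ⟨lof R ι G i x, toModule_lof R _ _⟩

end

variable {R : Type*} [Ring R] {G : ℕ → Type*} [∀ n, AddCommGroup (G n)] [∀ n, Module R (G n)]
  (f : ∀ i j : ℕ, i ≤ j → G i →ₗ[R] G j)

noncomputable def shift : (⨁ n, G n) →ₗ[R] ⨁ n, G n :=
  toModule R ℕ _ fun n => lof R ℕ G (n + 1) ∘ₗ f n (n + 1) n.le_succ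

theorem shift_lof (n : ℕ) (x : G n) :
    shift f (lof R ℕ G n x) = lof R ℕ G (n + 1) (f n (n + 1) n.le_succ x) :=
  toModule_lof R _ _

theorem shift_apply_zero (a : ⨁ n, G n) : shift f a 0 = 0 := by
  induction a using DirectSum.induction_on with
  | zero => simp
  | of j x =>
    rw [← lof_eq_of R, shift_lof, lof_eq_of, of_eq_of_ne _ _ _ j.succ_ne_zero.symm]
  | add a b ha hb => simp [ha, hb]

theorem shift_apply_succ (a : ⨁ n, G n) (n : ℕ) :
    shift f a (n + 1) = f n (n + 1) n.le_succ (a n) := by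
  induction a using DirectSum.induction_on with
  | zero => simp
  | of j x =>
    rw [← lof_eq_of R, shift_lof, lof_eq_of, lof_eq_of]
    by_cases h : j = n
    · subst h
      rw [of_eq_same, of_eq_same]
    · rw [of_eq_of_ne _ _ _ (Ne.symm h), of_eq_of_ne _ _ _ (by omega), map_zero]
  | add a b ha hb => simp [ha, hb]

theorem eq_zero_of_shift_eq_self {a : ⨁ n, G n} (ha : shift f a = a) : a = 0 := by
  have h : ∀ n, a n = 0 := by
    intro n
    induction n with
    | zero => rw [← ha, shift_apply_zero]
    | succ n ih => rw [← ha, shift_apply_succ, ih, map_zero]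
  exact DFinsupp.ext h

noncomputable def telescope : (⨁ n, G n) →ₗ[R] ⨁ n, G n := LinearMap.id - shift f

theorem telescope_injective : Function.Injective (telescope f) := by
  refine (injective_iff_map_eq_zero _).2 fun a ha => eq_zero_of_shift_eq_self f ?_
  exact (sub_eq_zero.1 ha).symm

theorem lof_sub_lof_mem_range_telescope [DirectedSystem G fun i j h => f i j h]
    {i j : ℕ} (hij : i ≤ j) (x : G i) :
    lof R ℕ G i x - lof R ℕ G j (f i j hij x) ∈ LinearMap.range (telescope f) := by
  induction j, hij using Nat.le_induction with
  | base => simp [DirectedSystem.map_self]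
  | succ j hij ih =>
    have step : lof R ℕ G i x - lof R ℕ G (j + 1) (f i (j + 1) (hij.trans j.le_succ) x) =
        (lof R ℕ G i x - lof R ℕ G j (f i j hij x)) + telescope f (lof R ℕ G j (f i j hij x)) := by
      rw [telescope, LinearMap.sub_apply, shift_lof, ← DirectedSystem.map_map f hij j.le_succ]
      simp
    rw [step]
    exact add_mem ih (LinearMap.mem_range_self _ _)

theorem ker_ofDirectSum [DirectedSystem G fun i j h => f i j h] :
    LinearMap.ker (ofDirectSum f) = LinearMap.range (telescope f) := by
  refine le_antisymm (fun a ha => ?_) (LinearMap.range_le_ker_iff.2 ?_)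
  · let L := lift R ℕ G f (fun i => (LinearMap.range (telescope f)).mkQ ∘ₗ lof R ℕ G i)
      fun i j hij x => by
        simpa [Submodule.Quotient.eq] using
          neg_mem (lof_sub_lof_mem_range_telescope f hij x)
    have hL : L ∘ₗ ofDirectSum f = (LinearMap.range (telescope f)).mkQ := by
      ext i x
      simp [L, ofDirectSum]
    rw [← Submodule.Quotient.mk_eq_zero, ← Submodule.mkQ_apply, ← hL, LinearMap.comp_apply,
      LinearMap.mem_ker.1 ha, map_zero]
  · ext i x
    simp [ofDirectSum, telescope, shift_lof]

end Module.DirectLimit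

theorem pdLE_one_of_projective_ker {R : Type} [Ring R] {M P : Type*} [AddCommGroup M]
    [Module R M] [AddCommGroup P] [Module R P] [Module.Projective R P] {q : P →ₗ[R] M}
    (hq : Function.Surjective q) [Module.Projective R (LinearMap.ker q)] : pdLE R 1 M :=
  Module.Projective.ker_of_surjective_of_ker
    (Finsupp.linearCombination_surjective R Function.surjective_id) hq

theorem pdLE_one_of_countable_directLimit_of_projective_general
    (R : Type) [CommRing R] (M : Type) [AddCommGroup M] [Module R M]
    (G : ℕ → Type) [∀ n, AddCommGroup (G n)] [∀ n, Module R (G n)]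
    (f : ∀ i j : ℕ, i ≤ j → G i →ₗ[R] G j) [DirectedSystem G fun i j h => f i j h]
    (hproj : ∀ n, Module.Projective R (G n))
    (e : Nonempty (M ≃ₗ[R] Module.DirectLimit G f)) :
    pdLE R 1 M := by
  obtain ⟨e⟩ := e
  have := hproj
  let q := e.symm.toLinearMap ∘ₗ Module.DirectLimit.ofDirectSum f
  have : Module.Projective R (LinearMap.ker q) := by
    rw [LinearEquiv.ker_comp, Module.DirectLimit.ker_ofDirectSum]
    exact .of_equiv (LinearEquiv.ofInjective _ (Module.DirectLimit.telescope_injective f))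
  exact pdLE_one_of_projective_ker (q := q)
    (e.symm.surjective.comp (Module.DirectLimit.ofDirectSum_surjective f))

/-- A flat module which is the direct limit of an `ω`-indexed direct system of projective
modules has projective dimension at most `1`. -/
theorem pdLE_one_of_countable_directLimit_of_projective
    (R : Type) [CommRing R] (M : Type) [AddCommGroup M] [Module R M] [Module.Flat R M]
    (G : ℕ → Type) [∀ n, AddCommGroup (G n)] [∀ n, Module R (G n)]
    (f : ∀ i j : ℕ, i ≤ j → G i →ₗ[R] G j) [DirectedSystem G fun i j h => f i j h]
    (hproj : ∀ n, Module.Projective R (G n))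
    (e : Nonempty (M ≃ₗ[R] Module.DirectLimit G f)) :
    pdLE R 1 M :=
  pdLE_one_of_countable_directLimit_of_projective_general R M G f hproj e
end

section
/- Let (F_α, g_{αβ})_{α<β<λ} be a well-ordered direct system of left R-modules with λ an infinite regular cardinal, κ ≥ λ a cardinal, and let T = κ^{<λ} be the tree of sequences of length < λ with values in κ. For a branch ν : λ → κ and α < λ, define d_{να} : F_α → ∏_{τ∈T} F_{ℓ(τ)} by placing x at coordinate ν↾α, g_{αβ}(x) at coordinates ν↾β for β > α, and 0 elsewhere. Then d_{να} is injective, and for each fixed branch ν, the sum X_ν = ∑_{α<λ} Im(d_{να}) is an internal direct sum: X_ν = ⊕_{α<λ} Y_{να} ≅ ⊕_{α<λ} F_α, where Y_{να} = Im(d_{να}). -/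
open Cardinal Ordinal

noncomputable section

variable (R : Type) [Ring R] (lam : Cardinal.{0}) (K : Type)

/-- The index set `λ` (the ordinals below `λ`). -/
abbrev Lam := {β : Ordinal.{0} // β < lam.ord}

/-- The tree `T = κ^{<λ}` of sequences of length `< λ` with values in `κ`. -/
abbrev TreeT := Σ β : Lam lam, ({γ : Ordinal.{0} // γ < β.1} → K)

/-- The set of branches `κ^λ`. -/
abbrev Branch := Lam lam → K

/-- Restriction `ν ↾ β` of a branch to an initial segment. -/
def restr (ν : Branch lam K) (β : Lam lam) : {γ : Ordinal.{0} // γ < β.1} → K :=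
  fun γ => ν ⟨γ.1, γ.2.trans β.2⟩

variable (F : Lam lam → Type) [∀ α, AddCommGroup (F α)] [∀ α, Module R (F α)]
  (g : ∀ α β : Lam lam, α ≤ β → F α →ₗ[R] F β)

open Classical in
/-- The map `d_{να} : F_α → ∏_{τ ∈ T} F_{ℓ(τ)}` placing `x` at coordinate `ν ↾ α`,
`g_{αβ}(x)` at coordinates `ν ↾ β` for `β > α`, and `0` elsewhere. -/
def dMap (ν : Branch lam K) (α : Lam lam) :
    F α →ₗ[R] (∀ τ : TreeT lam K, F τ.1) where
  toFun x := fun τ =>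
    if h : α ≤ τ.1 ∧ τ.2 = restr lam K ν τ.1 then g α τ.1 h.1 x else 0
  map_add' x y := by
    funext τ
    by_cases h : α ≤ τ.1 ∧ τ.2 = restr lam K ν τ.1 <;> simp [h]
  map_smul' r x := by
    funext τ
    by_cases h : α ≤ τ.1 ∧ τ.2 = restr lam K ν τ.1 <;> simp [h]

/-- **The tree construction.** Each `d_{να}` is injective, and for each branch `ν` the
submodules `Y_{να} = Im(d_{να})` form an internal direct sum, with
`X_ν = ⊕_{α<λ} Y_{να} ≅ ⊕_{α<λ} F_α`. -/
theorem dMap_injective_and_isInternal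
    (hreg : lam.IsRegular) (hK : lam ≤ #K)
    [DirectedSystem F fun α β h => g α β h] :
    (∀ (ν : Branch lam K) (α : Lam lam), Function.Injective (dMap R lam K F g ν α)) ∧
    (∀ ν : Branch lam K, iSupIndep (fun α : Lam lam => LinearMap.range (dMap R lam K F g ν α))) ∧
    (∀ ν : Branch lam K,
      Nonempty ((↥(⨆ α : Lam lam, LinearMap.range (dMap R lam K F g ν α))) ≃ₗ[R]
        (DirectSum (Lam lam) F))) := by
  classical
  set d := dMap R lam K F g with hd
  -- evaluation of `d ν α x` at a coordinate on the branch
  have heval : ∀ (ν : Branch lam K) (α β : Lam lam) (x : F α),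
      d ν α x ⟨β, restr lam K ν β⟩ = if h : α ≤ β then g α β h x else 0 := by
    intro ν α β x
    show (if h : α ≤ β ∧ restr lam K ν β = restr lam K ν β
        then g α β h.1 x else 0) = _
    by_cases h : α ≤ β
    · rw [dif_pos ⟨h, rfl⟩, dif_pos h]
    · rw [dif_neg (by simp [h]), dif_neg h]
  have heval_self : ∀ (ν : Branch lam K) (α : Lam lam) (x : F α),
      d ν α x ⟨α, restr lam K ν α⟩ = x := by
    intro ν α x
    rw [heval, dif_pos le_rfl]
    exact DirectedSystem.map_self (f := fun α β h => g α β h) x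
  -- injectivity of each `d ν α`
  have hinj : ∀ (ν : Branch lam K) (α : Lam lam), Function.Injective (d ν α) := by
    intro ν α a b hab
    have := congrFun hab ⟨α, restr lam K ν α⟩
    rwa [heval_self, heval_self] at this
  -- the assembled map on the direct sum
  set Phi : Branch lam K → ((Π₀ α : Lam lam, F α) →ₗ[R] (∀ τ : TreeT lam K, F τ.1)) :=
    fun ν => DFinsupp.lsum ℕ (fun α => d ν α) with hPhi
  have hPhiinj : ∀ ν : Branch lam K, Function.Injective (Phi ν) := by
    intro ν
    rw [injective_iff_map_eq_zero]
    intro y hy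
    suffices hall : ∀ α : Lam lam, y α = 0 by
      ext α; simp [hall α]
    intro α
    induction α using WellFoundedLT.induction with
    | _ α ih =>
      have h0 : Phi ν y ⟨α, restr lam K ν α⟩ = 0 := by rw [hy]; rfl
      rw [hPhi] at h0
      rw [DFinsupp.lsum_apply_apply, DFinsupp.sumAddHom_apply, DFinsupp.sum,
        Finset.sum_apply] at h0
      simp only [LinearMap.toAddMonoidHom_coe] at h0
      rw [Finset.sum_eq_single α (fun β hβ hne => ?_) (fun h => ?_)] at h0
      · rwa [heval_self] at h0
      · rcases lt_trichotomy β α with hlt | heq | hgt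
        · exact absurd (ih β hlt) (DFinsupp.mem_support_iff.mp hβ)
        · exact absurd heq hne
        · rw [heval, dif_neg (not_le.mpr hgt)]
      · rw [DFinsupp.notMem_support_iff.mp h]
        simp
  -- the ranges, assembled
  set e : ∀ (ν : Branch lam K) (α : Lam lam), F α ≃ₗ[R] LinearMap.range (d ν α) :=
    fun ν α => LinearEquiv.ofInjective (d ν α) (hinj ν α) with he
  have hfact : ∀ ν : Branch lam K,
      ∀ l : Π₀ α : Lam lam, ↥(LinearMap.range (d ν α)),
      DFinsupp.lsum ℕ (fun α => (LinearMap.range (d ν α)).subtype) l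
        = Phi ν (DFinsupp.mapRange.linearMap
            (fun α => ((e ν α).symm : ↥(LinearMap.range (d ν α)) →ₗ[R] F α)) l) := by
    intro ν l
    rw [hPhi, DFinsupp.sum_mapRange_index.linearMap]
    have hmaps : ∀ α : Lam lam, (LinearMap.range (d ν α)).subtype
        = (d ν α) ∘ₗ ((e ν α).symm : ↥(LinearMap.range (d ν α)) →ₗ[R] F α) := by
      intro α
      ext x
      simp only [Submodule.subtype_apply, LinearMap.comp_apply, LinearEquiv.coe_coe, he]
      rw [← LinearEquiv.ofInjective_apply (d ν α) (h := hinj ν α),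
        LinearEquiv.apply_symm_apply]
    exact congrArg (fun f => DFinsupp.lsum ℕ f l) (funext hmaps)
  have hsubinj : ∀ ν : Branch lam K,
      Function.Injective (DFinsupp.lsum ℕ (fun α => (LinearMap.range (d ν α)).subtype)) := by
    intro ν l₁ l₂ h
    rw [hfact ν, hfact ν] at h
    have h2 := hPhiinj ν h
    have hmapinj : Function.Injective (DFinsupp.mapRange.linearMap
        (fun α => ((e ν α).symm : ↥(LinearMap.range (d ν α)) →ₗ[R] F α))) := by
      have : (DFinsupp.mapRange.linearMap
          (fun α => ((e ν α).symm : ↥(LinearMap.range (d ν α)) →ₗ[R] F α)))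
          = (DFinsupp.mapRange.linearEquiv (fun α => (e ν α).symm) :
              (Π₀ α : Lam lam, ↥(LinearMap.range (d ν α))) →ₗ[R] Π₀ α : Lam lam, F α) := rfl
      rw [this]
      exact (DFinsupp.mapRange.linearEquiv (fun α => (e ν α).symm)).injective
    exact hmapinj h2
  refine ⟨hinj, fun ν => iSupIndep_of_dfinsupp_lsum_injective _ (hsubinj ν), fun ν => ?_⟩
  -- the supremum equals the range of the lsum of the subtype maps
  have hsup : (⨆ α : Lam lam, LinearMap.range (d ν α))
      = LinearMap.range (DFinsupp.lsum ℕ (fun α => (LinearMap.range (d ν α)).subtype)) :=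
    Submodule.iSup_eq_range_dfinsupp_lsum _
  refine ⟨?_⟩
  have e1 : (↥(⨆ α : Lam lam, LinearMap.range (d ν α))) ≃ₗ[R]
      ↥(LinearMap.range (DFinsupp.lsum ℕ (fun α => (LinearMap.range (d ν α)).subtype))) :=
    LinearEquiv.ofEq _ _ hsup
  have e2 := (LinearEquiv.ofInjective _ (hsubinj ν)).symm
  have e3 : (Π₀ α : Lam lam, ↥(LinearMap.range (d ν α))) ≃ₗ[R] (Π₀ α : Lam lam, F α) :=
    DFinsupp.mapRange.linearEquiv (fun α => (e ν α).symm)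
  exact e1 ≪≫ₗ e2 ≪≫ₗ e3


end
end

section
/- With the notation of the tree construction: let L = ∑_ν X_ν (sum over all branches ν ∈ κ^λ of the submodules X_ν of the product P = ∏_{τ∈κ^{<λ}} F_{ℓ(τ)}), and let D = L ∩ ∏^λ (the λ-support submodule, elements of support size < λ). Then L/D ≅ F^{(Br)}, the direct sum of copies of F = colim F_α indexed by the set of branches Br = κ^λ. That is, L/D = ⊕_ν (X_ν + D)/D and each (X_ν + D)/D ≅ F. -/
open Cardinal Ordinal

noncomputable section

variable (R : Type) [Ring R] (lam : Cardinal.{0}) (K : Type)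

variable (F : Lam lam → Type) [∀ α, AddCommGroup (F α)] [∀ α, Module R (F α)]
  (g : ∀ α β : Lam lam, α ≤ β → F α →ₗ[R] F β)

/-- `X_ν = ∑_{α<λ} Im(d_{να})`. -/
def Xsub (ν : Branch lam K) : Submodule R (∀ τ : TreeT lam K, F τ.1) :=
  ⨆ α : Lam lam, LinearMap.range (dMap R lam K F g ν α)

/-- `L = ∑_ν X_ν`. -/
def Lsub : Submodule R (∀ τ : TreeT lam K, F τ.1) :=
  ⨆ ν : Branch lam K, Xsub R lam K F g ν

/-- The `λ`-product `∏^λ`: the submodule of elements of support of cardinality `< λ`. -/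
def suppSub (hlam : ℵ₀ ≤ lam) : Submodule R (∀ τ : TreeT lam K, F τ.1) where
  carrier := {x | #{τ : TreeT lam K // x τ ≠ 0} < Cardinal.lift.{1} lam}
  zero_mem' := by
    have he : IsEmpty {τ : TreeT lam K // (0 : ∀ τ : TreeT lam K, F τ.1) τ ≠ 0} :=
      ⟨fun t => t.2 rfl⟩
    simp only [Set.mem_setOf_eq, Cardinal.mk_eq_zero]
    exact lt_of_lt_of_le (by simpa using Cardinal.aleph0_pos)
      (by simpa using Cardinal.lift_le.{1}.mpr hlam)
  add_mem' := by
    intro x y hx hy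
    simp only [Set.mem_setOf_eq] at *
    have hsub : {τ : TreeT lam K | (x + y) τ ≠ 0} ⊆
        {τ : TreeT lam K | x τ ≠ 0} ∪ {τ : TreeT lam K | y τ ≠ 0} := by
      intro τ h
      by_contra hc
      simp only [Set.mem_union, Set.mem_setOf_eq, not_or, not_not] at hc
      exact h (by simp [Pi.add_apply, hc.1, hc.2])
    calc #({τ : TreeT lam K | (x + y) τ ≠ 0})
        ≤ #({τ : TreeT lam K | x τ ≠ 0} ∪ {τ : TreeT lam K | y τ ≠ 0} : Set (TreeT lam K)) :=
          Cardinal.mk_le_mk_of_subset hsub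
      _ ≤ #({τ : TreeT lam K | x τ ≠ 0}) + #({τ : TreeT lam K | y τ ≠ 0}) :=
          Cardinal.mk_union_le _ _
      _ < Cardinal.lift.{1} lam :=
          Cardinal.add_lt_of_lt (by simpa using Cardinal.lift_le.{1}.mpr hlam) hx hy
  smul_mem' := by
    intro r x hx
    simp only [Set.mem_setOf_eq] at *
    refine lt_of_le_of_lt (Cardinal.mk_le_mk_of_subset ?_) hx
    intro τ h h0
    exact h (by simp [Pi.smul_apply, h0])

/-! ### Auxiliary lemmas -/

section Aux

lemma dMap_apply_of_mem (ν : Branch lam K) (α : Lam lam) (x : F α) (τ : TreeT lam K)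
    (h : α ≤ τ.1) (h2 : τ.2 = restr lam K ν τ.1) :
    dMap R lam K F g ν α x τ = g α τ.1 h x := by
  simp only [dMap, LinearMap.coe_mk, AddHom.coe_mk]
  rw [dif_pos ⟨h, h2⟩]

lemma dMap_apply_of_not (ν : Branch lam K) (α : Lam lam) (x : F α) (τ : TreeT lam K)
    (h : ¬(α ≤ τ.1 ∧ τ.2 = restr lam K ν τ.1)) :
    dMap R lam K F g ν α x τ = 0 := by
  simp only [dMap, LinearMap.coe_mk, AddHom.coe_mk]
  rw [dif_neg h]

/-- The submodule of elements supported on the branch `ν`. -/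
def suppOn (ν : Branch lam K) : Submodule R (∀ τ : TreeT lam K, F τ.1) where
  carrier := {x | ∀ τ : TreeT lam K, τ.2 ≠ restr lam K ν τ.1 → x τ = 0}
  zero_mem' := fun _ _ => rfl
  add_mem' := fun hx hy τ h => by
    simp only [Pi.add_apply, hx τ h, hy τ h, add_zero]
  smul_mem' := fun r x hx τ h => by
    simp only [Pi.smul_apply, hx τ h, smul_zero]

lemma Xsub_le_suppOn (ν : Branch lam K) :
    Xsub R lam K F g ν ≤ suppOn R lam K F ν := by
  apply iSup_le
  rintro α _ ⟨x, rfl⟩ τ h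
  exact dMap_apply_of_not R lam K F g ν α x τ fun hc => h hc.2

lemma mem_suppSub (hlam : ℵ₀ ≤ lam) (x : ∀ τ : TreeT lam K, F τ.1) :
    x ∈ suppSub R lam K F hlam ↔
      #{τ : TreeT lam K // x τ ≠ 0} < Cardinal.lift.{1} lam := Iff.rfl

lemma aleph0_le_lift_lam (hlam : ℵ₀ ≤ lam) : ℵ₀ ≤ Cardinal.lift.{1} lam := by
  simpa using Cardinal.lift_le.{1}.mpr hlam

lemma card_small (ν : Branch lam K) (p : TreeT lam K → Prop)
    (o : Ordinal.{0}) (ho : o < lam.ord)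
    (h : ∀ τ, p τ → τ.2 = restr lam K ν τ.1 ∧ τ.1.1 < o) :
    #{τ : TreeT lam K // p τ} < Cardinal.lift.{1} lam := by
  have hinj : Function.Injective
      (fun τ : {τ : TreeT lam K // p τ} => (⟨τ.1.1.1, (h _ τ.2).2⟩ : Set.Iio o)) := by
    rintro ⟨⟨⟨a, ha⟩, fa⟩, hp⟩ ⟨⟨⟨b, hb⟩, fb⟩, hq⟩ hts
    have h1 : a = b := congrArg Subtype.val hts
    subst h1
    have h2 : fa = fb := by
      have e1 := (h _ hp).1
      have e2 := (h _ hq).1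
      dsimp at e1 e2 ⊢
      rw [e1, e2]
    subst h2
    rfl
  calc #{τ : TreeT lam K // p τ} ≤ #(Set.Iio o) := Cardinal.mk_le_of_injective hinj
    _ = Cardinal.lift.{1} o.card := Ordinal.mk_Iio_ordinal o
    _ < Cardinal.lift.{1} lam := Cardinal.lift_lt.2 (Cardinal.lt_ord.1 ho)

lemma branch_inter_small (hlam : ℵ₀ ≤ lam) {ν ν' : Branch lam K} (hne : ν' ≠ ν)
    (p : TreeT lam K → Prop)
    (h : ∀ τ, p τ → τ.2 = restr lam K ν τ.1 ∧ τ.2 = restr lam K ν' τ.1) :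
    #{τ : TreeT lam K // p τ} < Cardinal.lift.{1} lam := by
  obtain ⟨α, hα⟩ := Function.ne_iff.1 hne
  refine card_small lam K ν p (Order.succ α.1)
    ((Cardinal.isSuccLimit_ord hlam).succ_lt α.2) fun τ hp => ⟨(h τ hp).1, ?_⟩
  rw [Order.lt_succ_iff]
  by_contra hc
  push_neg at hc
  apply hα
  have e : restr lam K ν τ.1 = restr lam K ν' τ.1 := ((h τ hp).1.symm.trans (h τ hp).2)
  have e2 := congrFun e ⟨α.1, hc⟩
  simpa [restr] using e2.symm

lemma dMap_compat (hlam : ℵ₀ ≤ lam) [DirectedSystem F fun α β h => g α β h]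
    (ν : Branch lam K) (α β : Lam lam) (h : α ≤ β) (x : F α) :
    dMap R lam K F g ν α x - dMap R lam K F g ν β (g α β h x)
      ∈ suppSub R lam K F hlam := by
  rw [mem_suppSub]
  refine card_small lam K ν _ β.1 β.2 fun τ hτ => ?_
  by_cases hb : τ.2 = restr lam K ν τ.1
  · refine ⟨hb, ?_⟩
    by_contra hlt
    push_neg at hlt
    apply hτ
    have hβτ : β ≤ τ.1 := hlt
    rw [Pi.sub_apply, dMap_apply_of_mem R lam K F g ν α x τ (h.trans hβτ) hb,
      dMap_apply_of_mem R lam K F g ν β _ τ hβτ hb,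
      Module.DirectedSystem.map_map g h hβτ x]
    exact sub_eq_zero_of_eq rfl
  · exact absurd (by
      rw [Pi.sub_apply, dMap_apply_of_not R lam K F g ν α x τ fun hc => hb hc.2,
        dMap_apply_of_not R lam K F g ν β _ τ fun hc => hb hc.2]
      exact _root_.sub_zero 0) hτ

lemma mk_lam_eq : #(Lam lam) = Cardinal.lift.{1} lam := by
  have h := Ordinal.mk_Iio_ordinal lam.ord
  rw [Cardinal.card_ord] at h
  exact h

lemma dMap_small_zero (hlam : ℵ₀ ≤ lam) (ν : Branch lam K) (α : Lam lam) (x : F α)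
    (hx : dMap R lam K F g ν α x ∈ suppSub R lam K F hlam) :
    ∃ β : Lam lam, ∃ h : α ≤ β, g α β h x = 0 := by
  by_contra hc
  push_neg at hc
  rw [mem_suppSub] at hx
  have hinj : Function.Injective (fun β : {β : Lam lam // α ≤ β} =>
      (⟨⟨β.1, restr lam K ν β.1⟩, by
        rw [dMap_apply_of_mem R lam K F g ν α x ⟨β.1, restr lam K ν β.1⟩ β.2 rfl]
        exact hc β.1 β.2⟩ : {τ : TreeT lam K // dMap R lam K F g ν α x τ ≠ 0})) := by
    rintro ⟨a, ha⟩ ⟨b, hb⟩ hab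
    dsimp only at hab
    exact Subtype.ext (congrArg (fun t : TreeT lam K => t.1) (congrArg Subtype.val hab))
  have hcompl : #{β : Lam lam // ¬ α ≤ β} < Cardinal.lift.{1} lam := by
    have hlt' : ∀ β : {β : Lam lam // ¬ α ≤ β}, β.1.1 < α.1 :=
      fun β => lt_of_not_ge fun hle => β.2 hle
    have hinj2 : Function.Injective
        (fun β : {β : Lam lam // ¬ α ≤ β} => (⟨β.1.1, hlt' β⟩ : Set.Iio α.1)) := by
      rintro ⟨a, ha⟩ ⟨b, hb⟩ hab
      dsimp only at hab
      have h3 : (a : Ordinal) = b := Subtype.mk_eq_mk.mp hab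
      exact Subtype.ext (Subtype.ext h3)
    calc #{β : Lam lam // ¬ α ≤ β} ≤ #(Set.Iio α.1) := Cardinal.mk_le_of_injective hinj2
      _ = Cardinal.lift.{1} (α.1).card := Ordinal.mk_Iio_ordinal α.1
      _ < Cardinal.lift.{1} lam := Cardinal.lift_lt.2 (Cardinal.lt_ord.1 α.2)
  have hle : Cardinal.lift.{1} lam ≤ #{β : Lam lam // α ≤ β} := by
    by_contra h2
    push_neg at h2
    have hsum : #{β : Lam lam // α ≤ β} + #{β : Lam lam // ¬ α ≤ β} = #(Lam lam) :=
      Cardinal.mk_sum_compl {β : Lam lam | α ≤ β}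
    have hlt := Cardinal.add_lt_of_lt (aleph0_le_lift_lam lam hlam) h2 hcompl
    rw [hsum, mk_lam_eq lam] at hlt
    exact lt_irrefl _ hlt
  exact absurd ((hle.trans (Cardinal.mk_le_of_injective hinj)).trans_lt hx) (lt_irrefl _)

lemma nonempty_lam (hlam : ℵ₀ ≤ lam) : Nonempty (Lam lam) :=
  ⟨⟨0, (Cardinal.isSuccLimit_ord hlam).pos⟩⟩

/-- The induced map from the direct limit to the quotient modulo `∏^λ`. -/
def phiMap (hlam : ℵ₀ ≤ lam) [DirectedSystem F fun α β h => g α β h] (ν : Branch lam K) :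
    Module.DirectLimit F g →ₗ[R]
      ((∀ τ : TreeT lam K, F τ.1) ⧸ suppSub R lam K F hlam) :=
  Module.DirectLimit.lift R (Lam lam) F g
    (fun α => (suppSub R lam K F hlam).mkQ ∘ₗ dMap R lam K F g ν α)
    (fun α β hab x => by
      simp only [LinearMap.comp_apply, Submodule.mkQ_apply]
      rw [Submodule.Quotient.eq, ← neg_sub]
      exact Submodule.neg_mem _ (dMap_compat R lam K F g hlam ν α β hab x))

lemma phiMap_of (hlam : ℵ₀ ≤ lam) [DirectedSystem F fun α β h => g α β h]
    (ν : Branch lam K) (α : Lam lam) (x : F α) :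
    phiMap R lam K F g hlam ν (Module.DirectLimit.of R (Lam lam) F g α x)
      = (suppSub R lam K F hlam).mkQ (dMap R lam K F g ν α x) := by
  rw [phiMap, Module.DirectLimit.lift_of]
  rfl

lemma phiMap_range (hlam : ℵ₀ ≤ lam) [DirectedSystem F fun α β h => g α β h]
    (ν : Branch lam K) :
    LinearMap.range (phiMap R lam K F g hlam ν)
      = (Xsub R lam K F g ν).map (suppSub R lam K F hlam).mkQ := by
  haveI : Nonempty (Lam lam) := nonempty_lam lam hlam
  apply le_antisymm
  · rintro q ⟨z, rfl⟩
    induction z using Module.DirectLimit.induction_on with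
    | ih α x =>
      rw [phiMap_of]
      exact ⟨dMap R lam K F g ν α x,
        Submodule.mem_iSup_of_mem α ⟨x, rfl⟩, rfl⟩
  · rw [Xsub, Submodule.map_iSup]
    apply iSup_le
    intro α
    rintro _ ⟨_, ⟨x, rfl⟩, rfl⟩
    exact ⟨Module.DirectLimit.of R (Lam lam) F g α x, phiMap_of R lam K F g hlam ν α x⟩

lemma phiMap_injective (hlam : ℵ₀ ≤ lam) [DirectedSystem F fun α β h => g α β h]
    (ν : Branch lam K) :
    Function.Injective (phiMap R lam K F g hlam ν) := by
  haveI : Nonempty (Lam lam) := nonempty_lam lam hlam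
  rw [injective_iff_map_eq_zero]
  intro z hz
  obtain ⟨α, x, rfl⟩ := Module.DirectLimit.exists_of z
  rw [phiMap_of] at hz
  have hmem : dMap R lam K F g ν α x ∈ suppSub R lam K F hlam := by
    rwa [Submodule.mkQ_apply, Submodule.Quotient.mk_eq_zero] at hz
  obtain ⟨β, hb, h0⟩ := dMap_small_zero R lam K F g hlam ν α x hmem
  rw [← Module.DirectLimit.of_f (hij := hb) (x := x), h0, map_zero]

lemma finset_branch_small (hlam : ℵ₀ ≤ lam) (ν : Branch lam K)
    (s : Finset (Branch lam K)) (hs : ∀ ν' ∈ s, ν' ≠ ν)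
    (y : ∀ τ : TreeT lam K, F τ.1) (hy : y ∈ ⨆ ν' ∈ s, Xsub R lam K F g ν') :
    #{τ : TreeT lam K // τ.2 = restr lam K ν τ.1 ∧ y τ ≠ 0} < Cardinal.lift.{1} lam := by
  classical
  induction s using Finset.induction_on generalizing y with
  | empty =>
    rw [show (⨆ ν' ∈ (∅ : Finset (Branch lam K)), Xsub R lam K F g ν') = ⊥ by simp] at hy
    rw [Submodule.mem_bot] at hy
    subst hy
    have he : IsEmpty {τ : TreeT lam K //
        τ.2 = restr lam K ν τ.1 ∧ (0 : ∀ τ : TreeT lam K, F τ.1) τ ≠ 0} :=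
      ⟨fun t => t.2.2 rfl⟩
    have h0 : #{τ : TreeT lam K //
        τ.2 = restr lam K ν τ.1 ∧ (0 : ∀ τ : TreeT lam K, F τ.1) τ ≠ 0} = 0 :=
      Cardinal.mk_eq_zero _
    rw [h0]
    exact Cardinal.aleph0_pos.trans_le (aleph0_le_lift_lam lam hlam)
  | @insert a s ha ih =>
    rw [Finset.iSup_insert] at hy
    obtain ⟨y₁, hy₁, y₂, hy₂, rfl⟩ := Submodule.mem_sup.mp hy
    have hb1 : #{τ : TreeT lam K //
        τ.2 = restr lam K ν τ.1 ∧ τ.2 = restr lam K a τ.1} < Cardinal.lift.{1} lam :=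
      branch_inter_small lam K hlam (hs a (Finset.mem_insert_self a s)) _ fun _ h => h
    have hb2 := ih (fun ν' hν' => hs ν' (Finset.mem_insert_of_mem hν')) y₂ hy₂
    have hsub : ∀ τ : TreeT lam K,
        (τ.2 = restr lam K ν τ.1 ∧ (y₁ + y₂) τ ≠ 0) →
        ((τ.2 = restr lam K ν τ.1 ∧ τ.2 = restr lam K a τ.1) ∨
          (τ.2 = restr lam K ν τ.1 ∧ y₂ τ ≠ 0)) := by
      intro τ ⟨hbr, hne⟩
      by_cases h2 : y₂ τ = 0
      · left
        refine ⟨hbr, ?_⟩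
        by_contra hba
        exact hne (by simp [Pi.add_apply, Xsub_le_suppOn R lam K F g a hy₁ τ hba, h2])
      · exact Or.inr ⟨hbr, h2⟩
    calc #{τ : TreeT lam K // τ.2 = restr lam K ν τ.1 ∧ (y₁ + y₂) τ ≠ 0}
        ≤ #{τ : TreeT lam K // (τ.2 = restr lam K ν τ.1 ∧ τ.2 = restr lam K a τ.1) ∨
            (τ.2 = restr lam K ν τ.1 ∧ y₂ τ ≠ 0)} := Cardinal.mk_subtype_mono hsub
      _ ≤ #{τ : TreeT lam K // τ.2 = restr lam K ν τ.1 ∧ τ.2 = restr lam K a τ.1}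
            + #{τ : TreeT lam K // τ.2 = restr lam K ν τ.1 ∧ y₂ τ ≠ 0} :=
          Cardinal.mk_union_le {τ : TreeT lam K | τ.2 = restr lam K ν τ.1 ∧
            τ.2 = restr lam K a τ.1} {τ : TreeT lam K | τ.2 = restr lam K ν τ.1 ∧ y₂ τ ≠ 0}
      _ < Cardinal.lift.{1} lam :=
          Cardinal.add_lt_of_lt (aleph0_le_lift_lam lam hlam) hb1 hb2

lemma indep_lemma (hlam : ℵ₀ ≤ lam) [DirectedSystem F fun α β h => g α β h] :
    iSupIndep (fun ν : Branch lam K =>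
      (Xsub R lam K F g ν).map (suppSub R lam K F hlam).mkQ) := by
  classical
  intro ν
  rw [Submodule.disjoint_def]
  intro q hq hq'
  obtain ⟨x, hx, rfl⟩ := hq
  rw [iSup_subtype'] at hq'
  rw [Submodule.mem_iSup_iff_exists_finset] at hq'
  obtain ⟨s, hs⟩ := hq'
  have hmap : (⨆ σ ∈ s, (Xsub R lam K F g σ.1).map (suppSub R lam K F hlam).mkQ)
      = (⨆ σ ∈ s, Xsub R lam K F g σ.1).map (suppSub R lam K F hlam).mkQ := by
    simp_rw [Submodule.map_iSup]
  rw [hmap] at hs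
  obtain ⟨y, hy, hxy⟩ := hs
  have hxysub : x - y ∈ suppSub R lam K F hlam := by
    rw [← Submodule.Quotient.eq]
    exact hxy.symm
  have hy' : y ∈ ⨆ ν' ∈ s.image Subtype.val, Xsub R lam K F g ν' := by
    rw [Finset.iSup_finset_image]
    exact hy
  have hbig := finset_branch_small R lam K F g hlam ν (s.image Subtype.val)
    (fun ν' hν' => by
      obtain ⟨σ, _, rfl⟩ := Finset.mem_image.mp hν'
      exact σ.2) y hy'
  have hxsmall : x ∈ suppSub R lam K F hlam := by
    rw [mem_suppSub]
    have hsub : ∀ τ : TreeT lam K, x τ ≠ 0 →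
        ((x - y) τ ≠ 0 ∨ (τ.2 = restr lam K ν τ.1 ∧ y τ ≠ 0)) := by
      intro τ hτ
      have hbr : τ.2 = restr lam K ν τ.1 := by
        by_contra hba
        exact hτ (Xsub_le_suppOn R lam K F g ν hx τ hba)
      by_cases hxyτ : (x - y) τ = 0
      · refine Or.inr ⟨hbr, ?_⟩
        rw [Pi.sub_apply, sub_eq_zero] at hxyτ
        rw [← hxyτ]
        exact hτ
      · exact Or.inl hxyτ
    calc #{τ : TreeT lam K // x τ ≠ 0}
        ≤ #{τ : TreeT lam K // (x - y) τ ≠ 0 ∨ (τ.2 = restr lam K ν τ.1 ∧ y τ ≠ 0)} :=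
          Cardinal.mk_subtype_mono hsub
      _ ≤ #{τ : TreeT lam K // (x - y) τ ≠ 0}
            + #{τ : TreeT lam K // τ.2 = restr lam K ν τ.1 ∧ y τ ≠ 0} :=
          Cardinal.mk_union_le {τ : TreeT lam K | (x - y) τ ≠ 0}
            {τ : TreeT lam K | τ.2 = restr lam K ν τ.1 ∧ y τ ≠ 0}
      _ < Cardinal.lift.{1} lam :=
          Cardinal.add_lt_of_lt (aleph0_le_lift_lam lam hlam)
            ((mem_suppSub R lam K F hlam _).mp hxysub) hbig
  rw [Submodule.mkQ_apply, Submodule.Quotient.mk_eq_zero]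
  exact hxsmall

end Aux

/-- **The tree construction, second part.** Modulo the `λ`-product `∏^λ` (that is, modulo
`D = L ∩ ∏^λ`), the images of the `X_ν` are independent, each is isomorphic to
`F = colim F_α`, and `L/D ≅ F^{(Br)}`, the direct sum of copies of `F` indexed by the set
of branches. -/
theorem Lsub_quotient_iso
    (hreg : lam.IsRegular) (hK : lam ≤ #K)
    [DirectedSystem F fun α β h => g α β h] :
    iSupIndep (fun ν : Branch lam K =>
      (Xsub R lam K F g ν).map (suppSub R lam K F hreg.aleph0_le).mkQ) ∧
    (∀ ν : Branch lam K,
      Nonempty ((↥((Xsub R lam K F g ν).map (suppSub R lam K F hreg.aleph0_le).mkQ)) ≃ₗ[R]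
        Module.DirectLimit F g)) ∧
    Nonempty ((↥((Lsub R lam K F g).map (suppSub R lam K F hreg.aleph0_le).mkQ)) ≃ₗ[R]
      (Branch lam K →₀ Module.DirectLimit F g)) := by
  classical
  haveI : Nonempty (Lam lam) := nonempty_lam lam hreg.aleph0_le
  refine ⟨indep_lemma R lam K F g hreg.aleph0_le, fun ν =>
    ⟨((LinearEquiv.ofInjective _ (phiMap_injective R lam K F g hreg.aleph0_le ν)).trans
      (LinearEquiv.ofEq _ _ (phiMap_range R lam K F g hreg.aleph0_le ν))).symm⟩, ?_⟩
  set π := (suppSub R lam K F hreg.aleph0_le).mkQ with hπ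
  set Φ : (Branch lam K →₀ Module.DirectLimit F g) →ₗ[R] _ :=
    Finsupp.lsum ℕ (fun ν => phiMap R lam K F g hreg.aleph0_le ν) with hΦ
  have hΦapp : ∀ c : Branch lam K →₀ Module.DirectLimit F g,
      Φ c = ∑ ν' ∈ c.support, phiMap R lam K F g hreg.aleph0_le ν' (c ν') := fun c => rfl
  have hinj : Function.Injective Φ := by
    rw [injective_iff_map_eq_zero]
    intro c hc
    ext ν
    show c ν = 0
    by_cases hν : ν ∈ c.support
    · have hsum : phiMap R lam K F g hreg.aleph0_le ν (c ν)
          + ∑ ν' ∈ c.support.erase ν, phiMap R lam K F g hreg.aleph0_le ν' (c ν') = 0 := by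
        have hc' := hc
        rw [hΦapp c, ← Finset.add_sum_erase _
          (fun ν' => phiMap R lam K F g hreg.aleph0_le ν' (c ν')) hν] at hc'
        exact hc'
      have h1 : phiMap R lam K F g hreg.aleph0_le ν (c ν)
          = - ∑ ν' ∈ c.support.erase ν, phiMap R lam K F g hreg.aleph0_le ν' (c ν') :=
        eq_neg_of_add_eq_zero_left hsum
      have h2 : phiMap R lam K F g hreg.aleph0_le ν (c ν) ∈
          (⨆ (j) (_ : j ≠ ν), (Xsub R lam K F g j).map π) := by
        rw [h1]
        refine Submodule.neg_mem _ (Submodule.sum_mem _ fun ν' hν' => ?_)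
        refine Submodule.mem_iSup_of_mem ν' (Submodule.mem_iSup_of_mem
          (Finset.ne_of_mem_erase hν') ?_)
        rw [hπ, ← phiMap_range R lam K F g hreg.aleph0_le ν']
        exact ⟨c ν', rfl⟩
      have h3 : phiMap R lam K F g hreg.aleph0_le ν (c ν)
          ∈ (Xsub R lam K F g ν).map π := by
        rw [hπ, ← phiMap_range R lam K F g hreg.aleph0_le ν]
        exact ⟨c ν, rfl⟩
      have h0 := Submodule.disjoint_def.mp
        (indep_lemma R lam K F g hreg.aleph0_le ν) _ h3 h2
      exact phiMap_injective R lam K F g hreg.aleph0_le ν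
        (show _ = phiMap R lam K F g hreg.aleph0_le ν 0 by rw [h0, map_zero])
    · exact Finsupp.notMem_support_iff.mp hν
  have hrange : LinearMap.range Φ = (Lsub R lam K F g).map π := by
    rw [Lsub, Submodule.map_iSup]
    apply le_antisymm
    · rintro _ ⟨c, rfl⟩
      rw [hΦapp c]
      refine Submodule.sum_mem _ fun ν' _ => ?_
      refine Submodule.mem_iSup_of_mem ν' ?_
      rw [hπ, ← phiMap_range R lam K F g hreg.aleph0_le ν']
      exact ⟨c ν', rfl⟩
    · refine iSup_le fun ν => ?_
      rw [hπ, ← phiMap_range R lam K F g hreg.aleph0_le ν]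
      rintro _ ⟨z, rfl⟩
      exact ⟨Finsupp.single ν z, by
        rw [hΦ]
        exact Finsupp.lsum_single _ _ _ _⟩
  exact ⟨((LinearEquiv.ofInjective Φ hinj).trans (LinearEquiv.ofEq _ _ hrange)).symm⟩

end
end
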